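/- arXiv:1505.01900 — 6 statements merged into one kernel-verified Lean document; each statement's English description precedes it below -/
import Mathlib

section
/- The identity F(1/6, 1/2, 7/6; 1-x) = (1/√(4x-3)) · F(1/6, 1/2, 7/6; 1 - x(9-8x)²/(4x-3)³) holds for all real x in a neighborhood of 1, where the square root satisfies √(4x-3) = 1 at x = 1. -/
open Real Filter

/-- Gauss hypergeometric series F(a,b,c;x). -/
noncomputable def hypergeom (a b c x : ℝ) : ℝ :=
  ∑' n : ℕ, ((ascPochhammer ℝ n).eval a * (ascPochhammer ℝ n).eval b) /
    ((ascPochhammer ℝ n).eval c * (n.factorial : ℝ)) * x ^ n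

/-!
Since `(1/6)ₙ / (7/6)ₙ = 1 / (6n + 1) = ∫₀¹ s⁶ⁿ ds`, integrating the binomial series of
`(1 - z s⁶)^(-1/2)` termwise gives `F(1/6, 1/2, 7/6; z) = ∫₀¹ (1 - z s⁶)^(-1/2) ds`.
Put `z = 1 - x`; the second argument is then `z' = -27z / (1 - 4z)³`. The substitution
`u = √(1 - 4z) s / √(1 - 4z s⁶)` satisfies `z' u⁶ = -27w / (1 - 4w)³` with `w = z s⁶`,
and the polynomial identity `(1 - 4w)³ + 27w = (1 - w)(1 + 8w)²` makes
`du / √(1 - z' u⁶) = √(1 - 4z) ds / √(1 - z s⁶)`.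
-/

open scoped Nat

lemma Ring.choose_add_sub_one_eq_ascPochhammer_eval_div {R : Type*} [Field R] [CharZero R]
    (b : R) (n : ℕ) :
    Ring.choose (b + n - 1) n = (ascPochhammer R n).eval b / n ! := by
  rw [Ring.choose_eq_smul, Polynomial.descPochhammer_smeval_eq_ascPochhammer,
    Polynomial.ascPochhammer_smeval_eq_eval, smul_eq_mul, inv_mul_eq_div]
  ring_nf

theorem hasSum_ascPochhammer_div_factorial_mul_pow (b : ℝ) {w : ℝ} (hw : |w| < 1) :
    HasSum (fun n : ℕ => (ascPochhammer ℝ n).eval b / n ! * w ^ n) ((1 - w) ^ (-b)) := by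
  have h := (one_div_one_sub_rpow_hasFPowerSeriesOnBall_zero b).hasSum (y := w)
    (by simpa [enorm_eq_nnnorm, ← NNReal.coe_lt_coe] using hw)
  simp only [FormalMultilinearSeries.ofScalars_apply_eq, smul_eq_mul, zero_add,
    Ring.choose_add_sub_one_eq_ascPochhammer_eval_div] at h
  rwa [rpow_neg (by linarith [abs_lt.1 hw]), ← one_div]

theorem summable_abs_ascPochhammer_div_factorial_mul_pow (b : ℝ) {w : ℝ} (hw : |w| < 1) :
    Summable (fun n : ℕ => |(ascPochhammer ℝ n).eval b / n !| * |w| ^ n) := by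
  have hseries := one_div_one_sub_rpow_hasFPowerSeriesOnBall_zero b
  have h := FormalMultilinearSeries.summable_norm_mul_pow _ (r := ‖w‖₊)
    (lt_of_lt_of_le (by simpa [← NNReal.coe_lt_coe] using hw) hseries.r_le)
  simpa [FormalMultilinearSeries.ofScalars_norm_eq_mul,
    Ring.choose_add_sub_one_eq_ascPochhammer_eval_div, abs_div] using h

lemma abs_mul_pow_le_abs {z s : ℝ} (k : ℕ) (hs₀ : 0 ≤ s) (hs₁ : s ≤ 1) :
    |z * s ^ k| ≤ |z| := by
  rw [abs_mul, abs_pow, abs_of_nonneg hs₀]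
  exact mul_le_of_le_one_right (abs_nonneg z) (pow_le_one₀ hs₀ hs₁)

lemma ascPochhammer_eval_add_one_mul {S : Type*} [CommSemiring S] (a : S) (n : ℕ) :
    (ascPochhammer S n).eval (a + 1) * a = (ascPochhammer S n).eval a * (a + n) := by
  induction n with
  | zero => simp
  | succ n ih =>
    rw [ascPochhammer_succ_eval, ascPochhammer_succ_eval, mul_right_comm, ih]
    push_cast
    ring

lemma ascPochhammer_inv_natCast_mul_div_eq {k : ℕ} (hk : 0 < k) (b : ℝ) (n : ℕ) :
    (ascPochhammer ℝ n).eval (k⁻¹ : ℝ) * (ascPochhammer ℝ n).eval b /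
        ((ascPochhammer ℝ n).eval ((k⁻¹ : ℝ) + 1) * n !) =
      (ascPochhammer ℝ n).eval b / n ! / (k * n + 1) := by
  have hpos := ascPochhammer_pos n _ (inv_pos.2 (Nat.cast_pos.2 hk : (0 : ℝ) < k))
  have hshift : (ascPochhammer ℝ n).eval ((k⁻¹ : ℝ) + 1) =
      (ascPochhammer ℝ n).eval (k⁻¹ : ℝ) * (k * n + 1) := by
    have := ascPochhammer_eval_add_one_mul (k⁻¹ : ℝ) n
    field_simp at this ⊢
    linarith
  rw [hshift]
  generalize (ascPochhammer ℝ n).eval (k⁻¹ : ℝ) = p at hpos ⊢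
  field_simp

theorem hypergeom_inv_natCast_eq_integral {k : ℕ} (hk : 0 < k) (b : ℝ) {z : ℝ}
    (hz : |z| < 1) :
    hypergeom (k : ℝ)⁻¹ b ((k : ℝ)⁻¹ + 1) z =
      ∫ s in (0:ℝ)..1, (1 - z * s ^ k) ^ (-b) := by
  set c : ℕ → ℝ := fun n => (ascPochhammer ℝ n).eval b / (n ! : ℝ)
  have hle : ∀ s ∈ Set.uIoc (0:ℝ) 1, |z * s ^ k| ≤ |z| := fun s hs => by
    rw [Set.uIoc_of_le zero_le_one] at hs
    exact abs_mul_pow_le_abs k hs.1.le hs.2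
  have hbound : ∀ n, ∀ s ∈ Set.uIoc (0:ℝ) 1,
      ‖c n * (z * s ^ k) ^ n‖ ≤ |c n| * |z| ^ n := fun n s hs => by
    rw [norm_mul, norm_pow, Real.norm_eq_abs, Real.norm_eq_abs]
    exact mul_le_mul_of_nonneg_left (pow_le_pow_left₀ (abs_nonneg _) (hle s hs) n)
      (abs_nonneg _)
  have hterm : ∀ n : ℕ,
      ∫ s in (0:ℝ)..1, c n * (z * s ^ k) ^ n = c n / (k * n + 1) * z ^ n := by
    intro n
    simp_rw [mul_pow, ← pow_mul]
    rw [intervalIntegral.integral_const_mul, intervalIntegral.integral_const_mul, integral_pow]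
    push_cast
    field_simp
    simp
  have hsum := intervalIntegral.hasSum_integral_of_dominated_convergence
    (F := fun n s => c n * (z * s ^ k) ^ n) (f := fun s => (1 - z * s ^ k) ^ (-b))
    (μ := MeasureTheory.volume) (fun n _ => |c n| * |z| ^ n)
    (fun n => (by fun_prop : Continuous _).aestronglyMeasurable)
    (fun n => Eventually.of_forall (hbound n))
    (Eventually.of_forall fun _ _ => summable_abs_ascPochhammer_div_factorial_mul_pow b hz)
    intervalIntegrable_const
    (Eventually.of_forall fun s hs =>
      hasSum_ascPochhammer_div_factorial_mul_pow b ((hle s hs).trans_lt hz))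
  simp only [hterm] at hsum
  rw [← hsum.tsum_eq, hypergeom]
  congr! 2 with n
  rw [ascPochhammer_inv_natCast_mul_div_eq hk b n]

lemma hypergeom_sixth_half_eq_integral {z : ℝ} (hz : |z| < 1) :
    hypergeom (1/6) (1/2) (7/6) z = ∫ s in (0:ℝ)..1, (√(1 - z * s ^ 6))⁻¹ := by
  rw [show (1/6 : ℝ) = ((6 : ℕ) : ℝ)⁻¹ by norm_num,
    show (7/6 : ℝ) = ((6 : ℕ) : ℝ)⁻¹ + 1 by norm_num,
    hypergeom_inv_natCast_eq_integral (by norm_num) (1/2) hz]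
  refine intervalIntegral.integral_congr fun s hs => ?_
  rw [Set.uIcc_of_le zero_le_one] at hs
  have : |z * s ^ 6| < 1 := (abs_mul_pow_le_abs 6 hs.1 hs.2).trans_lt hz
  rw [rpow_neg (by linarith [(abs_lt.1 this).2]), sqrt_eq_rpow]

noncomputable def cubicArg (z : ℝ) : ℝ := -27 * z / (1 - 4 * z) ^ 3

noncomputable def cubicSubst (z s : ℝ) : ℝ := √(1 - 4 * z) * s / √(1 - 4 * (z * s ^ 6))

lemma one_sub_cubicArg {w : ℝ} (hw : 1 - 4 * w ≠ 0) :
    1 - cubicArg w = (1 - w) * (1 + 8 * w) ^ 2 / (1 - 4 * w) ^ 3 := by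
  rw [cubicArg, eq_div_iff (pow_ne_zero 3 hw), sub_mul, div_mul_cancel₀ _ (pow_ne_zero 3 hw)]
  ring

lemma sqrt_one_sub_cubicArg {w : ℝ} (h₁ : 0 < 1 - w) (h₈ : 0 < 1 + 8 * w)
    (h₄ : 0 < 1 - 4 * w) :
    √(1 - cubicArg w) = √(1 - w) * (1 + 8 * w) / ((1 - 4 * w) * √(1 - 4 * w)) := by
  rw [one_sub_cubicArg h₄.ne', ← sqrt_sq (by positivity :
    0 ≤ √(1 - w) * (1 + 8 * w) / ((1 - 4 * w) * √(1 - 4 * w)))]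
  congr 1
  rw [div_pow, mul_pow, mul_pow, sq_sqrt h₁.le, sq_sqrt h₄.le]
  ring

lemma cubicArg_mul_cubicSubst_pow_six {z s : ℝ} (hz : 0 < 1 - 4 * z)
    (hzs : 0 < 1 - 4 * (z * s ^ 6)) :
    cubicArg z * cubicSubst z s ^ 6 = cubicArg (z * s ^ 6) := by
  have hsqrt6 : ∀ {t : ℝ}, 0 < t → √t ^ 6 = t ^ 3 := fun ht => by
    rw [show 6 = 2 * 3 by rfl, pow_mul, sq_sqrt ht.le]
  rw [cubicArg, cubicArg, cubicSubst, div_pow, mul_pow, hsqrt6 hz, hsqrt6 hzs, div_mul_div_comm,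
    mul_left_comm, mul_div_mul_left _ _ (pow_ne_zero 3 hz.ne'), mul_assoc]

noncomputable def cubicSubstDeriv (z s : ℝ) : ℝ :=
  √(1 - 4 * z) * (1 + 8 * (z * s ^ 6)) / ((1 - 4 * (z * s ^ 6)) * √(1 - 4 * (z * s ^ 6)))

lemma hasDerivAt_cubicSubst {z s : ℝ} (hzs : 0 < 1 - 4 * (z * s ^ 6)) :
    HasDerivAt (cubicSubst z) (cubicSubstDeriv z s) s := by
  have hden : HasDerivAt (fun t => √(1 - 4 * (z * t ^ 6)))
      (-(4 * (z * (6 * s ^ 5))) / (2 * √(1 - 4 * (z * s ^ 6)))) s := by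
    simpa using ((((hasDerivAt_pow 6 s).const_mul z).const_mul 4).const_sub 1).sqrt hzs.ne'
  refine (((hasDerivAt_id' s).const_mul √(1 - 4 * z)).div hden
    (sqrt_pos.2 hzs).ne').congr_deriv ?_
  have hq := sqrt_pos.2 hzs
  have hq2 := sq_sqrt hzs.le
  rw [cubicSubstDeriv]
  generalize √(1 - 4 * (z * s ^ 6)) = q at *
  rw [← hq2]
  field_simp
  linear_combination 2 * √(1 - 4 * z) * hq2

lemma cubicSubstDeriv_div_sqrt_eq {z s : ℝ} (hz : 0 < 1 - 4 * z) (h₁ : 0 < 1 - z * s ^ 6)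
    (h₈ : 0 < 1 + 8 * (z * s ^ 6)) (h₄ : 0 < 1 - 4 * (z * s ^ 6)) :
    cubicSubstDeriv z s / √(1 - cubicArg z * cubicSubst z s ^ 6) =
      √(1 - 4 * z) / √(1 - z * s ^ 6) := by
  rw [cubicSubstDeriv, cubicArg_mul_cubicSubst_pow_six hz h₄,
    sqrt_one_sub_cubicArg h₁ h₈ h₄]
  have hA : 0 < (1 - 4 * (z * s ^ 6)) * √(1 - 4 * (z * s ^ 6)) := by positivity
  have hC := sqrt_pos.2 h₁
  generalize (1 - 4 * (z * s ^ 6)) * √(1 - 4 * (z * s ^ 6)) = A at *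
  generalize 1 + 8 * (z * s ^ 6) = B at *
  generalize √(1 - z * s ^ 6) = C at *
  field_simp

theorem integral_inv_sqrt_one_sub_cubicArg_mul_pow_six {z : ℝ} (hz₁ : -1/8 < z)
    (hz₂ : z < 1/4) :
    ∫ u in (0:ℝ)..1, (√(1 - cubicArg z * u ^ 6))⁻¹ =
      √(1 - 4 * z) * ∫ s in (0:ℝ)..1, (√(1 - z * s ^ 6))⁻¹ := by
  have hz : 0 < 1 - 4 * z := by linarith
  have hw : ∀ s ∈ Set.uIcc (0:ℝ) 1,
      0 < 1 - z * s ^ 6 ∧ 0 < 1 + 8 * (z * s ^ 6) ∧ 0 < 1 - 4 * (z * s ^ 6) := by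
    intro s hs
    rw [Set.uIcc_of_le zero_le_one] at hs
    have h₀ : 0 ≤ s ^ 6 := by positivity
    have h₁ : s ^ 6 ≤ 1 := pow_le_one₀ hs.1 hs.2
    refine ⟨?_, ?_, ?_⟩ <;> nlinarith
  have hderiv_cont : ContinuousOn (cubicSubstDeriv z) (Set.uIcc 0 1) := by
    refine ContinuousOn.div (by fun_prop) (by fun_prop) fun s hs => ?_
    have h₄ := (hw s hs).2.2
    have := sqrt_pos.2 h₄
    positivity
  have hg : ContinuousOn (fun u => (√(1 - cubicArg z * u ^ 6))⁻¹)
      (cubicSubst z '' Set.uIcc 0 1) := by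
    rintro _ ⟨s, hs, rfl⟩
    obtain ⟨h₁, h₈, h₄⟩ := hw s hs
    have hpos : 0 < √(1 - cubicArg z * cubicSubst z s ^ 6) := by
      rw [cubicArg_mul_cubicSubst_pow_six hz h₄, sqrt_one_sub_cubicArg h₁ h₈ h₄]
      have := sqrt_pos.2 h₁
      have := sqrt_pos.2 h₄
      positivity
    exact ((by fun_prop : Continuous fun u => √(1 - cubicArg z * u ^ 6)).continuousAt.inv₀
      hpos.ne').continuousWithinAt
  have hsubst := intervalIntegral.integral_comp_mul_deriv'
    (fun s hs => hasDerivAt_cubicSubst (hw s hs).2.2) hderiv_cont hg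
  have hφ₀ : cubicSubst z 0 = 0 := by simp [cubicSubst]
  have hφ₁ : cubicSubst z 1 = 1 := by simp [cubicSubst, (sqrt_pos.2 hz).ne']
  rw [hφ₀, hφ₁] at hsubst
  rw [← hsubst, ← intervalIntegral.integral_const_mul]
  refine intervalIntegral.integral_congr fun s hs => ?_
  obtain ⟨h₁, h₈, h₄⟩ := hw s hs
  rw [Function.comp_apply, inv_mul_eq_div, cubicSubstDeriv_div_sqrt_eq hz h₁ h₈ h₄,
    div_eq_mul_inv]

/-- F(1/6,1/2,7/6;1-x) = (1/√(4x-3))·F(1/6,1/2,7/6; 1 - x(9-8x)²/(4x-3)³)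
for all x in a neighborhood of 1. -/
theorem hypergeom_cubic_transform :
    ∀ᶠ x : ℝ in nhds 1,
      hypergeom (1/6) (1/2) (7/6) (1 - x) =
        (1 / Real.sqrt (4*x - 3)) *
          hypergeom (1/6) (1/2) (7/6) (1 - x * (9 - 8*x)^2 / (4*x - 3)^3) := by
  have hnear : ∀ᶠ x : ℝ in nhds 1, x ∈ Set.Ioo (7/8) (9/8) :=
    Ioo_mem_nhds (by norm_num) (by norm_num)
  have hcont : ContinuousAt (fun x : ℝ => cubicArg (1 - x)) 1 := by
    unfold cubicArg
    fun_prop (disch := norm_num)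
  have harg_small : ∀ᶠ x : ℝ in nhds 1, cubicArg (1 - x) ∈ Set.Ioo (-1) 1 := by
    refine hcont.preimage_mem_nhds ?_
    rw [sub_self, cubicArg, mul_zero, zero_div]
    exact Ioo_mem_nhds (by norm_num) one_pos
  filter_upwards [hnear, harg_small] with x ⟨hx₁, hx₂⟩ harg
  have harg_eq : 1 - x * (9 - 8*x)^2 / (4*x - 3)^3 = cubicArg (1 - x) := by
    have := one_sub_cubicArg (w := 1 - x) (by linarith)
    rw [show x * (9 - 8*x)^2 / (4*x - 3)^3 =
      (1 - (1 - x)) * (1 + 8 * (1 - x)) ^ 2 / (1 - 4 * (1 - x)) ^ 3 by ring]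
    linarith
  rw [harg_eq, hypergeom_sixth_half_eq_integral (abs_lt.2 ⟨by linarith, by linarith⟩),
    hypergeom_sixth_half_eq_integral (abs_lt.2 harg),
    integral_inv_sqrt_one_sub_cubicArg_mul_pow_six (by linarith) (by linarith),
    show 1 - 4 * (1 - x) = 4 * x - 3 by ring, ← mul_assoc,
    one_div_mul_cancel (sqrt_pos.2 (by linarith)).ne', one_mul]
end

section
/- For all a, b ∈ ℚ and z ∈ ℂ, θ_{a,b}(iz, i) = e^{2πi ab} · e^{πz²} · θ_{-b,a}(z, i). -/
open Complex Real

/- Pulling out the first factor of each term writes θ_{a,b}(z, τ) as a multiple of Jacobi's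
`jacobiTheta₂ (aτ + z + b) τ`. At τ = i the modular transformation of `jacobiTheta₂` relates its
values at w and -iw, and -i(ai + iz + b) = -bi + z + a, so the characteristics (a, b) turn
into (-b, a). -/

/-- Theta function with characteristics a, b:
θ_{a,b}(z,τ) = Σ_{n∈ℤ} exp(πi(n+a)²τ + 2πi(n+a)(z+b)). -/
noncomputable def theta (a b : ℝ) (z τ : ℂ) : ℂ :=
  ∑' n : ℤ, Complex.exp (Real.pi * Complex.I * ((n : ℂ) + (a : ℂ))^2 * τ +
    2 * Real.pi * Complex.I * ((n : ℂ) + (a : ℂ)) * (z + (b : ℂ)))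

lemma theta_eq_exp_mul_jacobiTheta₂ (a b : ℝ) (z τ : ℂ) :
    theta a b z τ = cexp (π * I * a ^ 2 * τ + 2 * π * I * a * (z + b)) *
      jacobiTheta₂ (a * τ + z + b) τ := by
  rw [theta, jacobiTheta₂, ← tsum_mul_left]
  refine tsum_congr fun n => ?_
  rw [jacobiTheta₂_term, ← Complex.exp_add]
  ring_nf

lemma jacobiTheta₂_I (w : ℂ) :
    jacobiTheta₂ w I = cexp (-π * w ^ 2) * jacobiTheta₂ (-(I * w)) I := by
  have h := jacobiTheta₂_functional_equation w I
  rwa [show -I * I = 1 by simp, one_cpow, div_one, one_mul, show (-1 : ℂ) / I = I by simp,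
    show w / I = -(I * w) by simp [div_I, mul_comm],
    show -(π : ℂ) * I * w ^ 2 / I = -π * w ^ 2 by field_simp] at h

theorem theta_I_mul (a b : ℝ) (z : ℂ) :
    theta a b (I * z) I = cexp (2 * π * I * a * b) * cexp (π * z ^ 2) * theta (-b) a z I := by
  rw [theta_eq_exp_mul_jacobiTheta₂, theta_eq_exp_mul_jacobiTheta₂, jacobiTheta₂_I,
    show -(I * (a * I + I * z + b)) = ((-b : ℝ) : ℂ) * I + z + a by
      push_cast; linear_combination (-(a : ℂ) - z) * I_sq]
  simp only [← Complex.exp_add, ← mul_assoc]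
  congr 2
  push_cast
  linear_combination (-(π : ℂ) * (z ^ 2 + (b : ℂ) ^ 2)) * I_sq

/-- θ_{a,b}(iz, i) = e^{2πi ab} e^{πz²} θ_{-b,a}(z, i) for a, b ∈ ℚ, z ∈ ℂ. -/
theorem theta_i_mult (a b : ℚ) (z : ℂ) :
    theta (a : ℝ) (b : ℝ) (Complex.I * z) Complex.I =
      Complex.exp (2 * Real.pi * Complex.I * (a : ℂ) * (b : ℂ)) *
        Complex.exp (Real.pi * z^2) * theta (-(b : ℝ)) (a : ℝ) z Complex.I := by
  simpa using theta_I_mul a b z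
end

section
/- For all complex z, √2 · θ_{0,1/2}(z,i)² = θ_{0,0}(z,i)² + θ_{1/2,1/2}(z,i)² and √2 · θ_{1/2,0}(z,i)² = θ_{0,0}(z,i)² − θ_{1/2,1/2}(z,i)². -/
/-!
Squaring the series and substituting `(m, n) = (k + l, k - l)` or `(k + l + 1, k - l)` according
to the parity of `m + n` turns `(m + a)² + (n + a)²` into `2 (k + a')² + 2 l'²` with
`a' ∈ {a, a + 1/2}`, `l' ∈ {l, l + 1/2}`. Together with the periodicity of the characteristics,
this writes each `θ_{a,b}(z, τ)²`, `a, b ∈ {0, 1/2}`, as a bilinear combination of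
`θ_{0,0}(2z, 2τ)`, `θ_{1/2,0}(2z, 2τ)` and the constants `X = θ_{0,0}(0, 2τ)`,
`Y = θ_{1/2,0}(0, 2τ)`. At `τ = i`, splitting by parity gives `θ_{0,0}(0, i/2) = X + Y` and
`θ_{0,1/2}(0, i/2) = X - Y`, while the Jacobi imaginary transformation gives
`θ_{0,b}(0, i/2) = √2 θ_{b,0}(0, 2i)`; the relations are linear consequences of
`√2 X = X + Y` and `√2 Y = X - Y`.
-/

open Complex Real

noncomputable def Int.evenOddEquiv : ℤ ⊕ ℤ ≃ ℤ :=
  Equiv.ofBijective (Sum.elim (fun k ↦ 2 * k) (fun k ↦ 2 * k + 1)) <| by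
    refine ⟨?_, fun n ↦ ?_⟩
    · rintro (k | k) (l | l) h <;> simp only [Sum.elim_inl, Sum.elim_inr, Sum.inl.injEq,
        Sum.inr.injEq, reduceCtorEq] at h ⊢ <;> omega
    · obtain ⟨k, rfl | rfl⟩ := n.even_or_odd'
      exacts [⟨.inl k, rfl⟩, ⟨.inr k, rfl⟩]

noncomputable def Int.rotationEquiv : (ℤ × ℤ) ⊕ (ℤ × ℤ) ≃ ℤ × ℤ :=
  Equiv.ofBijective
    (Sum.elim (fun p ↦ (p.1 + p.2, p.1 - p.2)) (fun p ↦ (p.1 + p.2 + 1, p.1 - p.2))) <| by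
    refine ⟨?_, fun ⟨m, n⟩ ↦ ?_⟩
    · rintro (⟨k, l⟩ | ⟨k, l⟩) (⟨k', l'⟩ | ⟨k', l'⟩) h <;>
        simp only [Sum.elim_inl, Sum.elim_inr, Sum.inl.injEq, Sum.inr.injEq, Prod.mk.injEq,
          reduceCtorEq] at h ⊢ <;> omega
    · obtain ⟨k, h | h⟩ := (m + n).even_or_odd'
      · exact ⟨.inl (k, m - k), by simp only [Sum.elim_inl, Prod.mk.injEq]; omega⟩
      · exact ⟨.inr (k, m - k - 1), by simp only [Sum.elim_inr, Prod.mk.injEq]; omega⟩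

section

variable {E : Type*} [NormedAddCommGroup E] [CompleteSpace E]

theorem tsum_int_eq_tsum_even_add_tsum_odd {f : ℤ → E} (hf : Summable f) :
    ∑' n, f n = ∑' k, f (2 * k) + ∑' k, f (2 * k + 1) := by
  have hf' := Int.evenOddEquiv.summable_iff.mpr hf
  rw [← Int.evenOddEquiv.tsum_eq]
  exact Summable.tsum_sum (hf'.comp_injective Sum.inl_injective)
    (hf'.comp_injective Sum.inr_injective)

end

theorem sq_tsum_int_eq_tsum_rotation {R : Type*} [NormedRing R] [CompleteSpace R] {f : ℤ → R}
    (hf : Summable fun n ↦ ‖f n‖) :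
    (∑' n, f n) ^ 2 = ∑' p : ℤ × ℤ, f (p.1 + p.2) * f (p.1 - p.2) +
      ∑' p : ℤ × ℤ, f (p.1 + p.2 + 1) * f (p.1 - p.2) := by
  have h := Int.rotationEquiv.summable_iff.mpr (summable_mul_of_summable_norm hf hf)
  rw [sq, tsum_mul_tsum_of_summable_norm hf hf, ← Int.rotationEquiv.tsum_eq]
  exact Summable.tsum_sum (h.comp_injective Sum.inl_injective) (h.comp_injective Sum.inr_injective)

noncomputable def thetaTerm (a b : ℝ) (z τ : ℂ) (n : ℤ) : ℂ :=
  cexp (π * I * ((n : ℂ) + (a : ℂ)) ^ 2 * τ + 2 * π * I * ((n : ℂ) + (a : ℂ)) * (z + (b : ℂ)))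

section

variable (a b : ℝ) (z τ : ℂ)

theorem theta_eq_tsum_thetaTerm : theta a b z τ = ∑' n, thetaTerm a b z τ n := rfl

theorem thetaTerm_eq_mul_jacobiTheta₂_term (n : ℤ) :
    thetaTerm a b z τ n =
      cexp (π * I * a ^ 2 * τ + 2 * π * I * a * (z + b)) *
        jacobiTheta₂_term n (z + b + a * τ) τ := by
  rw [thetaTerm, jacobiTheta₂_term, ← Complex.exp_add]
  ring_nf

theorem theta_eq_mul_jacobiTheta₂ :
    theta a b z τ =
      cexp (π * I * a ^ 2 * τ + 2 * π * I * a * (z + b)) * jacobiTheta₂ (z + b + a * τ) τ := by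
  simp only [theta_eq_tsum_thetaTerm, thetaTerm_eq_mul_jacobiTheta₂_term, jacobiTheta₂,
    tsum_mul_left]

variable {τ} in
theorem summable_norm_thetaTerm (hτ : 0 < τ.im) : Summable fun n ↦ ‖thetaTerm a b z τ n‖ := by
  simp only [summable_norm_iff, thetaTerm_eq_mul_jacobiTheta₂_term]
  exact ((summable_jacobiTheta₂_term_iff _ _).mpr hτ).mul_left _

theorem theta_add_one_left : theta (a + 1) b z τ = theta a b z τ := by
  rw [theta_eq_tsum_thetaTerm, theta_eq_tsum_thetaTerm,
    ← (Equiv.addRight (1 : ℤ)).tsum_eq (thetaTerm a b z τ)]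
  refine tsum_congr fun n ↦ ?_
  simp only [thetaTerm, Equiv.coe_addRight]
  push_cast
  ring_nf

theorem theta_add_one_right : theta a (b + 1) z τ = cexp (2 * π * I * a) * theta a b z τ := by
  rw [theta_eq_tsum_thetaTerm, theta_eq_tsum_thetaTerm, ← tsum_mul_left]
  refine tsum_congr fun n ↦ ?_
  have h : thetaTerm a (b + 1) z τ n =
      cexp (n * (2 * π * I)) * (cexp (2 * π * I * a) * thetaTerm a b z τ n) := by
    simp only [thetaTerm, ← Complex.exp_add]
    push_cast
    ring_nf
  rw [h, Complex.exp_int_mul_two_pi_mul_I, one_mul]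

theorem thetaTerm_add_mul_thetaTerm_sub (k l : ℤ) :
    thetaTerm a b z τ (k + l) * thetaTerm a b z τ (k - l) =
      thetaTerm a (2 * b) (2 * z) (2 * τ) k * thetaTerm 0 0 0 (2 * τ) l := by
  simp only [thetaTerm, ← Complex.exp_add]
  push_cast
  ring_nf

theorem thetaTerm_add_add_one_mul_thetaTerm_sub (k l : ℤ) :
    thetaTerm a b z τ (k + l + 1) * thetaTerm a b z τ (k - l) =
      thetaTerm (a + 1 / 2) (2 * b) (2 * z) (2 * τ) k * thetaTerm (1 / 2) 0 0 (2 * τ) l := by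
  simp only [thetaTerm, ← Complex.exp_add]
  push_cast
  ring_nf

variable {τ}

theorem theta_sq (hτ : 0 < τ.im) :
    theta a b z τ ^ 2 =
      theta a (2 * b) (2 * z) (2 * τ) * theta 0 0 0 (2 * τ) +
        theta (a + 1 / 2) (2 * b) (2 * z) (2 * τ) * theta (1 / 2) 0 0 (2 * τ) := by
  have h2τ : 0 < (2 * τ).im := by simpa using hτ
  simp only [theta_eq_tsum_thetaTerm]
  rw [sq_tsum_int_eq_tsum_rotation (summable_norm_thetaTerm a b z hτ),
    tsum_mul_tsum_of_summable_norm (summable_norm_thetaTerm _ _ _ h2τ)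
      (summable_norm_thetaTerm _ _ _ h2τ),
    tsum_mul_tsum_of_summable_norm (summable_norm_thetaTerm _ _ _ h2τ)
      (summable_norm_thetaTerm _ _ _ h2τ)]
  simp only [thetaTerm_add_mul_thetaTerm_sub, thetaTerm_add_add_one_mul_thetaTerm_sub]

theorem theta_eq_add_theta_four_mul (hτ : 0 < τ.im) :
    theta a b z τ =
      theta (a / 2) (2 * b) (2 * z) (4 * τ) + theta ((a + 1) / 2) (2 * b) (2 * z) (4 * τ) := by
  rw [theta_eq_tsum_thetaTerm, tsum_int_eq_tsum_even_add_tsum_odd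
    (summable_norm_thetaTerm a b z hτ).of_norm]
  congr 1 <;> refine tsum_congr fun k ↦ ?_ <;> simp only [thetaTerm] <;> push_cast <;> ring_nf

theorem theta_zero_neg_inv (hτ : 0 < τ.im) :
    theta 0 b 0 (-1 / τ) = (-I * τ) ^ (1 / 2 : ℂ) * theta b 0 0 τ := by
  have hτ0 : τ ≠ 0 := fun h ↦ by simp [h] at hτ
  have hne : (-I * τ) ^ (1 / 2 : ℂ) ≠ 0 := by
    simp [Complex.cpow_eq_zero_iff, hτ0, Complex.I_ne_zero]
  rw [theta_eq_mul_jacobiTheta₂, theta_eq_mul_jacobiTheta₂]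
  simp only [Complex.ofReal_zero, zero_add, add_zero, zero_mul, mul_zero, zero_pow two_ne_zero,
    Complex.exp_zero, one_mul]
  rw [jacobiTheta₂_functional_equation (b * τ), mul_div_cancel_right₀ _ hτ0]
  have hexp : cexp (π * I * b ^ 2 * τ) * cexp (-π * I * (b * τ) ^ 2 / τ) = 1 := by
    rw [← Complex.exp_add, ← Complex.exp_zero]
    congr 1
    field_simp
    ring
  calc _ = ((-I * τ) ^ (1 / 2 : ℂ) * (1 / (-I * τ) ^ (1 / 2 : ℂ))) *
        (cexp (π * I * b ^ 2 * τ) * cexp (-π * I * (b * τ) ^ 2 / τ)) *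
          jacobiTheta₂ b (-1 / τ) := by rw [mul_one_div_cancel hne, hexp, one_mul, one_mul]
    _ = _ := by ring

end

section

variable (b : ℝ) (z τ : ℂ)

theorem theta_one_left : theta 1 b z τ = theta 0 b z τ := by
  simpa using theta_add_one_left 0 b z τ

theorem theta_zero_one_right : theta 0 1 z τ = theta 0 0 z τ := by
  simpa using theta_add_one_right 0 0 z τ

theorem theta_half_one_right : theta (1 / 2) 1 z τ = -theta (1 / 2) 0 z τ := by
  have h : cexp (2 * π * I * ((1 / 2 : ℝ) : ℂ)) = -1 := by
    rw [← Complex.exp_pi_mul_I]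
    push_cast
    ring_nf
  rw [← neg_one_mul, ← h, ← theta_add_one_right, zero_add]

variable {τ}

theorem theta_zero_zero_sq (hτ : 0 < τ.im) :
    theta 0 0 z τ ^ 2 =
      theta 0 0 (2 * z) (2 * τ) * theta 0 0 0 (2 * τ) +
        theta (1 / 2) 0 (2 * z) (2 * τ) * theta (1 / 2) 0 0 (2 * τ) := by
  rw [theta_sq 0 0 z hτ, mul_zero, zero_add]

theorem theta_zero_half_sq (hτ : 0 < τ.im) :
    theta 0 (1 / 2) z τ ^ 2 =
      theta 0 0 (2 * z) (2 * τ) * theta 0 0 0 (2 * τ) -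
        theta (1 / 2) 0 (2 * z) (2 * τ) * theta (1 / 2) 0 0 (2 * τ) := by
  rw [theta_sq 0 (1 / 2) z hτ, zero_add, mul_one_div_cancel two_ne_zero, theta_zero_one_right,
    theta_half_one_right, neg_mul, ← sub_eq_add_neg]

theorem theta_half_zero_sq (hτ : 0 < τ.im) :
    theta (1 / 2) 0 z τ ^ 2 =
      theta (1 / 2) 0 (2 * z) (2 * τ) * theta 0 0 0 (2 * τ) +
        theta 0 0 (2 * z) (2 * τ) * theta (1 / 2) 0 0 (2 * τ) := by
  rw [theta_sq (1 / 2) 0 z hτ, add_halves, mul_zero, theta_one_left]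

theorem theta_half_half_sq (hτ : 0 < τ.im) :
    theta (1 / 2) (1 / 2) z τ ^ 2 =
      -theta (1 / 2) 0 (2 * z) (2 * τ) * theta 0 0 0 (2 * τ) +
        theta 0 0 (2 * z) (2 * τ) * theta (1 / 2) 0 0 (2 * τ) := by
  rw [theta_sq (1 / 2) (1 / 2) z hτ, add_halves, mul_one_div_cancel two_ne_zero, theta_one_left,
    theta_zero_one_right, theta_half_one_right]

end

theorem two_cpow_one_div_two : (2 : ℂ) ^ (1 / 2 : ℂ) = (√2 : ℝ) := by
  rw [Real.sqrt_eq_rpow, Complex.ofReal_cpow zero_le_two]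
  norm_num

theorem theta_zero_I_div_two (b : ℝ) : theta 0 b 0 (I / 2) = (√2 : ℝ) * theta b 0 0 (2 * I) := by
  have h := theta_zero_neg_inv b (τ := 2 * I) (by simp)
  rwa [show -1 / (2 * I) = I / 2 by field_simp; simp,
    show -I * (2 * I) = 2 by ring_nf; simp, two_cpow_one_div_two] at h

theorem sqrt_two_mul_theta_zero_zero_two_I :
    (√2 : ℝ) * theta 0 0 0 (2 * I) = theta 0 0 0 (2 * I) + theta (1 / 2) 0 0 (2 * I) := by
  rw [← theta_zero_I_div_two, theta_eq_add_theta_four_mul 0 0 0 (by simp), zero_div, zero_add, mul_zero,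
    mul_zero, show (4 : ℂ) * (I / 2) = 2 * I by ring]

theorem sqrt_two_mul_theta_half_zero_two_I :
    (√2 : ℝ) * theta (1 / 2) 0 0 (2 * I) = theta 0 0 0 (2 * I) - theta (1 / 2) 0 0 (2 * I) := by
  rw [← theta_zero_I_div_two, theta_eq_add_theta_four_mul 0 (1 / 2) 0 (by simp), zero_div, zero_add,
    mul_zero, mul_one_div_cancel two_ne_zero, show (4 : ℂ) * (I / 2) = 2 * I by ring,
    theta_zero_one_right, theta_half_one_right, sub_eq_add_neg]

/-- Quadratic relations among theta functions at τ = i. -/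
theorem theta_quadratic_relations (z : ℂ) :
    (Real.sqrt 2 : ℂ) * theta 0 (1/2) z Complex.I ^ 2 =
      theta 0 0 z Complex.I ^ 2 + theta (1/2) (1/2) z Complex.I ^ 2 ∧
    (Real.sqrt 2 : ℂ) * theta (1/2) 0 z Complex.I ^ 2 =
      theta 0 0 z Complex.I ^ 2 - theta (1/2) (1/2) z Complex.I ^ 2 := by
  have hI : 0 < I.im := by simp
  rw [theta_zero_zero_sq z hI, theta_zero_half_sq z hI, theta_half_zero_sq z hI,
    theta_half_half_sq z hI]
  constructor
  · linear_combination theta 0 0 (2 * z) (2 * I) * sqrt_two_mul_theta_zero_zero_two_I -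
      theta (1 / 2) 0 (2 * z) (2 * I) * sqrt_two_mul_theta_half_zero_two_I
  · linear_combination theta (1 / 2) 0 (2 * z) (2 * I) * sqrt_two_mul_theta_zero_zero_two_I +
      theta 0 0 (2 * z) (2 * I) * sqrt_two_mul_theta_half_zero_two_I
end

section
/- If (t,u) ∈ ℂ² satisfies u⁴ = t²(t−1) with t ≠ 0, and (t', u') = ((t−2)²/t², (1+i)u(2−t)/t²), then u'⁴ = t'²(t'−1). In particular the map (t,u) ↦ (t',u') sends the affine curve u⁴ = t²(t−1) minus {t=0} into itself. -/
open Complex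

theorem Complex.one_add_I_pow_four : (1 + I) ^ 4 = -4 := by
  have h : (1 + I) ^ 2 = 2 * I := by ring_nf; rw [I_sq]; ring
  rw [show (4 : ℕ) = 2 * 2 from rfl, pow_mul, h, mul_pow, I_sq]
  norm_num

theorem curve_map_mem_of_pow_four_eq_neg_four {K : Type*} [Field K] {c t u : K}
    (hc : c ^ 4 = -4) (h : u ^ 4 = t ^ 2 * (t - 1)) :
    (c * u * (2 - t) / t ^ 2) ^ 4 = ((t - 2) ^ 2 / t ^ 2) ^ 2 * ((t - 2) ^ 2 / t ^ 2 - 1) := by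
  rcases eq_or_ne t 0 with rfl | ht
  · simp -- both sides are `0`, as `x / 0 = 0`
  field_simp
  rw [hc, h]
  ring

theorem curve_one_add_i_mult_general (t u : ℂ) (h : u^4 = t^2 * (t - 1)) :
    ((1 + Complex.I) * u * (2 - t) / t^2)^4 =
      ((t - 2)^2 / t^2)^2 * ((t - 2)^2 / t^2 - 1) :=
  curve_map_mem_of_pow_four_eq_neg_four one_add_I_pow_four h

/-- The (1+i)-multiplication map preserves the curve u⁴ = t²(t-1). -/
theorem curve_one_add_i_mult (t u : ℂ) (h : u^4 = t^2 * (t - 1)) (ht : t ≠ 0) :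
    ((1 + Complex.I) * u * (2 - t) / t^2)^4 =
      ((t - 2)^2 / t^2)^2 * ((t - 2)^2 / t^2 - 1) :=
  curve_one_add_i_mult_general t u h
end

section
/- If (t,u) ∈ ℂ² satisfies u⁶ = t³(t−1) with 4t ≠ 3, and t' = t(9−8t)²/(4t−3)³, u' = e^{πi/6}·√3·u·(9−8t)/(4t−3)², then u'⁶ = t'³(t'−1). -/
open Complex

/-!
Since `t (9 - 8t)² - (4t - 3)³ = 27 (1 - t)`, one has `t' - 1 = -27 (t - 1) / (4t - 3)³`, so the
curve equation for `(t', u')` reduces to that for `(t, u)` as soon as the constant `c` in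
`u' = c u (9 - 8t) / (4t - 3)²` satisfies `c⁶ = -27`; for `c = e^{πi/6} √3` this is
`e^{πi} · 3³ = -27`.
-/

lemma mul_sq_sub_cube_eq {R : Type*} [CommRing R] (t : R) :
    t * (9 - 8 * t) ^ 2 - (4 * t - 3) ^ 3 = -27 * (t - 1) := by
  ring

lemma div_cube_sub_one_eq {K : Type*} [Field K] {t : K} (ht : 4 * t - 3 ≠ 0) :
    t * (9 - 8 * t) ^ 2 / (4 * t - 3) ^ 3 - 1 = -27 * (t - 1) / (4 * t - 3) ^ 3 := by
  rw [div_sub_one (pow_ne_zero 3 ht), mul_sq_sub_cube_eq]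

theorem curve_map_of_pow_six_eq {K : Type*} [Field K] {c t u : K} (hc : c ^ 6 = -27)
    (h : u ^ 6 = t ^ 3 * (t - 1)) (ht : 4 * t - 3 ≠ 0) :
    (c * u * (9 - 8 * t) / (4 * t - 3) ^ 2) ^ 6 =
      (t * (9 - 8 * t) ^ 2 / (4 * t - 3) ^ 3) ^ 3 *
        (t * (9 - 8 * t) ^ 2 / (4 * t - 3) ^ 3 - 1) := by
  rw [div_cube_sub_one_eq ht]
  -- `ring` only combines inverse powers of an atom
  generalize 4 * t - 3 = d
  calc (c * u * (9 - 8 * t) / d ^ 2) ^ 6 = c ^ 6 * u ^ 6 * (9 - 8 * t) ^ 6 / d ^ 12 := by ring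
    _ = _ := by rw [hc, h]; ring

lemma exp_pi_mul_I_div_six_mul_sqrt_three_pow_six :
    (exp (Real.pi * I / 6) * (Real.sqrt 3 : ℂ)) ^ 6 = -27 := by
  have hexp : exp (Real.pi * I / 6) ^ 6 = -1 := by
    rw [← exp_nat_mul, show ((6 : ℕ) : ℂ) * (Real.pi * I / 6) = Real.pi * I by push_cast; ring,
      exp_pi_mul_I]
  have hsqrt : ((Real.sqrt 3 : ℝ) : ℂ) ^ 2 = 3 := by
    norm_cast
    exact Real.sq_sqrt (by norm_num)
  calc (exp (Real.pi * I / 6) * (Real.sqrt 3 : ℂ)) ^ 6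
      = exp (Real.pi * I / 6) ^ 6 * (((Real.sqrt 3 : ℝ) : ℂ) ^ 2) ^ 3 := by ring
    _ = -27 := by rw [hexp, hsqrt]; norm_num

/-- The (1+ζ)-multiplication map preserves the curve u⁶ = t³(t-1). -/
theorem curve_one_add_zeta_mult (t u : ℂ) (h : u^6 = t^3 * (t - 1))
    (ht : 4 * t ≠ 3) :
    (Complex.exp (Real.pi * Complex.I / 6) * (Real.sqrt 3 : ℂ) * u *
        (9 - 8*t) / (4*t - 3)^2)^6 =
      (t * (9 - 8*t)^2 / (4*t - 3)^3)^3 *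
        (t * (9 - 8*t)^2 / (4*t - 3)^3 - 1) :=
  curve_map_of_pow_six_eq exp_pi_mul_I_div_six_mul_sqrt_three_pow_six h (sub_ne_zero.mpr ht)
end

section
/- For 0 < a < b, set η₁ = b + √(b²−a²), η₂ = b − √(b²−a²). Then η₁η₂ = a², (η₁+η₂)/2 = b, and the real number x₀ = (3/4)·(η₁^{1/3} + η₂^{1/3})² / (η₁^{2/3} + η₁^{1/3}η₂^{1/3} + η₂^{2/3}) satisfies x₀(9−8x₀)²/(4x₀−3)³ = b²/a², where cube roots are positive reals. Moreover 4x₀ − 3 = 3·η₁^{1/3}η₂^{1/3}/(η₁^{2/3} + η₁^{1/3}η₂^{1/3} + η₂^{2/3}). -/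
/-!
Put `u = η₁^{1/3}` and `v = η₂^{1/3}`, so that `u³ + v³ = 2b` and `u³v³ = a²`. With
`D = u² + uv + v²` and `x₀ = 3(u + v)²/(4D)` one has `4x₀ − 3 = 3uv/D` and
`9 − 8x₀ = 3(u² − uv + v²)/D`, hence
`x₀(9 − 8x₀)²/(4x₀ − 3)³ = (u + v)²(u² − uv + v²)²/(4u³v³) = ((u³ + v³)/2)²/(u³v³) = b²/a²`.
-/

open Real

section CardanoRoot

variable {K : Type*} [Field K] [LinearOrder K] [IsStrictOrderedRing K]

def cardanoRoot (u v : K) : K := 3 / 4 * (u + v) ^ 2 / (u ^ 2 + u * v + v ^ 2)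

lemma sq_add_mul_add_sq_pos {u v : K} (hv : v ≠ 0) : 0 < u ^ 2 + u * v + v ^ 2 := by
  have : 0 < v ^ 2 := by positivity
  nlinarith [sq_nonneg (2 * u + v)]

lemma four_mul_cardanoRoot_sub_three {u v : K} (hv : v ≠ 0) :
    4 * cardanoRoot u v - 3 = 3 * u * v / (u ^ 2 + u * v + v ^ 2) := by
  have hD := (sq_add_mul_add_sq_pos (u := u) hv).ne'
  rw [cardanoRoot]
  -- `field_simp` only clears the denominator once it is an atom
  generalize hd : u ^ 2 + u * v + v ^ 2 = D at hD ⊢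
  field_simp
  rw [← hd]
  ring

lemma nine_sub_eight_mul_cardanoRoot {u v : K} (hv : v ≠ 0) :
    9 - 8 * cardanoRoot u v = 3 * (u ^ 2 - u * v + v ^ 2) / (u ^ 2 + u * v + v ^ 2) := by
  have hD := (sq_add_mul_add_sq_pos (u := u) hv).ne'
  rw [cardanoRoot]
  generalize hd : u ^ 2 + u * v + v ^ 2 = D at hD ⊢
  field_simp
  rw [← hd]
  ring

theorem cardanoRoot_cubic_eq {u v : K} (hu : u ≠ 0) (hv : v ≠ 0) :
    cardanoRoot u v * (9 - 8 * cardanoRoot u v) ^ 2 / (4 * cardanoRoot u v - 3) ^ 3 =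
      ((u ^ 3 + v ^ 3) / 2) ^ 2 / (u ^ 3 * v ^ 3) := by
  have hD := (sq_add_mul_add_sq_pos (u := u) hv).ne'
  rw [nine_sub_eight_mul_cardanoRoot hv, four_mul_cardanoRoot_sub_three hv, cardanoRoot]
  generalize u ^ 2 + u * v + v ^ 2 = D at hD ⊢
  field_simp
  ring

end CardanoRoot

lemma rpow_one_div_three_pow_three {x : ℝ} (hx : 0 ≤ x) : (x ^ ((1 : ℝ) / 3)) ^ 3 = x := by
  simpa only [one_div, Nat.cast_ofNat] using rpow_inv_natCast_pow hx (n := 3) three_ne_zero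

lemma rpow_two_div_three {x : ℝ} (hx : 0 ≤ x) : x ^ ((2 : ℝ) / 3) = (x ^ ((1 : ℝ) / 3)) ^ 2 := by
  rw [← rpow_natCast, ← rpow_mul hx]
  norm_num

section Roots

variable {a b : ℝ}

lemma sqrt_sq_sub_sq_lt (ha : 0 < a) (hab : a < b) : √(b ^ 2 - a ^ 2) < b := by
  rw [sqrt_lt' (ha.trans hab)]
  nlinarith

lemma add_sqrt_sq_sub_sq_mul_sub (h : a ^ 2 ≤ b ^ 2) :
    (b + √(b ^ 2 - a ^ 2)) * (b - √(b ^ 2 - a ^ 2)) = a ^ 2 := by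
  linear_combination -sq_sqrt (sub_nonneg.mpr h)

end Roots

/-- Explicit real solution of x(9-8x)²/(4x-3)³ = b²/a² for 0 < a < b. -/
theorem cubic_solution (a b : ℝ) (ha : 0 < a) (hab : a < b) :
    let η₁ := b + Real.sqrt (b^2 - a^2)
    let η₂ := b - Real.sqrt (b^2 - a^2)
    let x₀ := (3/4) * (η₁ ^ ((1:ℝ)/3) + η₂ ^ ((1:ℝ)/3))^2 /
      (η₁ ^ ((2:ℝ)/3) + η₁ ^ ((1:ℝ)/3) * η₂ ^ ((1:ℝ)/3) + η₂ ^ ((2:ℝ)/3))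
    η₁ * η₂ = a^2 ∧ (η₁ + η₂) / 2 = b ∧
    x₀ * (9 - 8*x₀)^2 / (4*x₀ - 3)^3 = b^2 / a^2 ∧
    4*x₀ - 3 = 3 * η₁ ^ ((1:ℝ)/3) * η₂ ^ ((1:ℝ)/3) /
      (η₁ ^ ((2:ℝ)/3) + η₁ ^ ((1:ℝ)/3) * η₂ ^ ((1:ℝ)/3) + η₂ ^ ((2:ℝ)/3)) := by
  intro η₁ η₂ x₀
  have hη₁ : 0 < η₁ := add_pos_of_pos_of_nonneg (ha.trans hab) (sqrt_nonneg _)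
  have hη₂ : 0 < η₂ := sub_pos.mpr (sqrt_sq_sub_sq_lt ha hab)
  have hprod : η₁ * η₂ = a ^ 2 := add_sqrt_sq_sub_sq_mul_sub (pow_le_pow_left₀ ha.le hab.le 2)
  have hsum : (η₁ + η₂) / 2 = b := by ring
  have hx₀ : x₀ = cardanoRoot (η₁ ^ ((1 : ℝ) / 3)) (η₂ ^ ((1 : ℝ) / 3)) := by
    simp only [x₀, cardanoRoot, rpow_two_div_three hη₁.le, rpow_two_div_three hη₂.le]
  have hu := (rpow_pos_of_pos hη₁ ((1 : ℝ) / 3)).ne'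
  have hv := (rpow_pos_of_pos hη₂ ((1 : ℝ) / 3)).ne'
  refine ⟨hprod, hsum, ?_, ?_⟩
  · rw [hx₀, cardanoRoot_cubic_eq hu hv, rpow_one_div_three_pow_three hη₁.le,
      rpow_one_div_three_pow_three hη₂.le, hsum, hprod]
  · rw [hx₀, four_mul_cardanoRoot_sub_three hv, rpow_two_div_three hη₁.le,
      rpow_two_div_three hη₂.le]
end
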